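/- The q-Chebyshev polynomials of the first kind satisfy the explicit formula T_n(x,s,q) = Σ_{j=0}^{⌊n/2⌋} q^{j²} ([n]_q/[n-j]_q) [n-j choose j]_q · ((-q;q)_{n-j-1}/(-q;q)_j) · s^j x^{n-2j} for all n > 0. -/

import Mathlib

/-- q-integer [n]_q = (1-q^n)/(1-q). -/
noncomputable def qint (q : ℂ) (n : ℕ) : ℂ := (1 - q ^ n) / (1 - q)

/-- q-factorial [n]_q!. -/
noncomputable def qfact (q : ℂ) (n : ℕ) : ℂ := ∏ i ∈ Finset.range n, qint q (i + 1)

/-- Gaussian (q-binomial) coefficient, 0 for k > n. -/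
noncomputable def qbinom (q : ℂ) (n k : ℕ) : ℂ :=
  if k ≤ n then qfact q n / (qfact q (n - k) * qfact q k) else 0

/-- q-shifted factorial (x;q)_n. -/
noncomputable def qpoch (x q : ℂ) (n : ℕ) : ℂ := ∏ i ∈ Finset.range n, (1 - q ^ i * x)

/-- q-Chebyshev polynomials of the first kind. -/
noncomputable def qcT (x s q : ℂ) : ℕ → ℂ
  | 0 => 1
  | 1 => x
  | n + 2 => (1 + q ^ (n + 1)) * x * qcT x s q (n + 1) + q ^ (n + 1) * s * qcT x s q n

/-!
Write `t(n, j)` for the `j`-th summand. It vanishes for `2j > n`, and for `n = 2j + e ≥ 1` it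
equals `q^(j²) s^j x^e [n] [n-j-1]! (-q;q)_(n-j-1) / ([e]! [j]! (-q;q)_j)`. In this form one
checks that the summands obey the recurrence of `T_n` termwise,
`t(n+2, j+1) = (1 + q^(n+1)) x t(n+1, j+1) + q^(n+1) s t(n, j)` and
`t(n+2, 0) = (1 + q^(n+1)) x t(n+1, 0)`, each a rational identity in `q` whose denominators do
not vanish as long as `q` is not a root of unity, which `‖q‖ < 1` guarantees. Summing over `j`
and checking `n = 1, 2` gives the formula; the induction cannot start at `n = 0`, where the
summand is the junk value `0 / 0 = 0`.
-/

open Finset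

lemma pow_ne_one_of_not_isOfFinOrder {M : Type*} [Monoid M] {x : M} (hx : ¬IsOfFinOrder x)
    {k : ℕ} (hk : k ≠ 0) : x ^ k ≠ 1 :=
  fun h => hx (isOfFinOrder_iff_pow_eq_one.2 ⟨k, Nat.pos_of_ne_zero hk, h⟩)

lemma pow_ne_neg_one_of_not_isOfFinOrder {R : Type*} [Ring R] {x : R} (hx : ¬IsOfFinOrder x)
    {k : ℕ} (hk : k ≠ 0) : x ^ k ≠ -1 := fun h =>
  pow_ne_one_of_not_isOfFinOrder hx (mul_ne_zero two_ne_zero hk) (by rw [pow_mul', h, neg_one_sq])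

lemma one_sub_pow_ne_zero_of_not_isOfFinOrder {R : Type*} [Ring R] {x : R}
    (hx : ¬IsOfFinOrder x) {k : ℕ} (hk : k ≠ 0) : 1 - x ^ k ≠ 0 :=
  sub_ne_zero.2 (pow_ne_one_of_not_isOfFinOrder hx hk).symm

lemma one_add_pow_ne_zero_of_not_isOfFinOrder {R : Type*} [Ring R] {x : R}
    (hx : ¬IsOfFinOrder x) {k : ℕ} (hk : k ≠ 0) : 1 + x ^ k ≠ 0 := fun h =>
  pow_ne_neg_one_of_not_isOfFinOrder hx hk (eq_neg_of_add_eq_zero_right h)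

section QAnalogues

variable {q : ℂ}

lemma qint_ne_zero (hq : ¬IsOfFinOrder q) {k : ℕ} (hk : k ≠ 0) : qint q k ≠ 0 :=
  div_ne_zero (one_sub_pow_ne_zero_of_not_isOfFinOrder hq hk)
    (by simpa using one_sub_pow_ne_zero_of_not_isOfFinOrder hq one_ne_zero)

lemma qfact_ne_zero (hq : ¬IsOfFinOrder q) (k : ℕ) : qfact q k ≠ 0 :=
  prod_ne_zero_iff.2 fun _ _ => qint_ne_zero hq (Nat.add_one_ne_zero _)

lemma qpoch_neg_ne_zero (hq : ¬IsOfFinOrder q) (k : ℕ) : qpoch (-q) q k ≠ 0 :=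
  prod_ne_zero_iff.2 fun i _ h =>
    one_add_pow_ne_zero_of_not_isOfFinOrder hq (Nat.add_one_ne_zero i) (by linear_combination h)

@[simp] lemma qfact_zero (q : ℂ) : qfact q 0 = 1 := prod_range_zero _

lemma qfact_succ (q : ℂ) (k : ℕ) : qfact q (k + 1) = qfact q k * qint q (k + 1) :=
  prod_range_succ _ _

@[simp] lemma qpoch_zero (x q : ℂ) : qpoch x q 0 = 1 := prod_range_zero _

lemma qpoch_neg_succ (q : ℂ) (k : ℕ) :
    qpoch (-q) q (k + 1) = qpoch (-q) q k * (1 + q ^ (k + 1)) := by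
  simp only [qpoch, prod_range_succ]
  ring

lemma qint_two_mul (q : ℂ) (k : ℕ) : qint q (2 * k) = qint q k * (1 + q ^ k) := by
  unfold qint
  ring

end QAnalogues

noncomputable def qcTTerm (x s q : ℂ) (n j : ℕ) : ℂ :=
  q ^ (j ^ 2) * (qint q n / qint q (n - j)) * qbinom q (n - j) j *
    (qpoch (-q) q (n - j - 1) / qpoch (-q) q j) * s ^ j * x ^ (n - 2 * j)

namespace qcTTerm

variable {q : ℂ} (x s : ℂ)

lemma eq_zero_of_lt {n j : ℕ} (h : n < 2 * j) : qcTTerm x s q n j = 0 := by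
  simp [qcTTerm, qbinom, show ¬j ≤ n - j by omega]

lemma two_mul_add (hq : ¬IsOfFinOrder q) {j e f : ℕ} (h : j + e = f + 1) :
    qcTTerm x s q (2 * j + e) j = q ^ (j ^ 2) * s ^ j * x ^ e *
      (qint q (2 * j + e) * qfact q f * qpoch (-q) q f /
        (qfact q e * qfact q j * qpoch (-q) q j)) := by
  rw [qcTTerm, qbinom, if_pos (by omega), show 2 * j + e - j = f + 1 by omega,
    show f + 1 - j = e by omega, Nat.add_sub_cancel, Nat.add_sub_cancel_left, qfact_succ]
  have := qint_ne_zero hq (Nat.add_one_ne_zero f)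
  have := qfact_ne_zero hq
  have := qpoch_neg_ne_zero hq
  field_simp

lemma zero_right (hq : ¬IsOfFinOrder q) (n : ℕ) :
    qcTTerm x s q (n + 1) 0 = qpoch (-q) q n * x ^ (n + 1) := by
  have h := two_mul_add x s hq (j := 0) (e := n + 1) (f := n) (by omega)
  rw [mul_zero, zero_add] at h
  rw [h, qfact_succ]
  have := qint_ne_zero hq (Nat.add_one_ne_zero n)
  have := qfact_ne_zero hq n
  field_simp
  simp

lemma two_mul_self (hq : ¬IsOfFinOrder q) {j : ℕ} (hj : j ≠ 0) :
    qcTTerm x s q (2 * j) j = q ^ (j ^ 2) * s ^ j := by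
  obtain ⟨f, rfl⟩ := Nat.exists_eq_add_one_of_ne_zero hj
  have h := two_mul_add x s hq (j := f + 1) (e := 0) (f := f) rfl
  rw [add_zero] at h
  rw [h, qint_two_mul, qfact_succ, qpoch_neg_succ]
  have := qint_ne_zero hq (Nat.add_one_ne_zero f)
  have := qfact_ne_zero hq f
  have := qpoch_neg_ne_zero hq f
  have := one_add_pow_ne_zero_of_not_isOfFinOrder hq (Nat.add_one_ne_zero f)
  field_simp
  simp

lemma succ_succ_of_lt (hq : ¬IsOfFinOrder q) {m j : ℕ} (h : 2 * j < m) :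
    qcTTerm x s q (m + 2) (j + 1) = (1 + q ^ (m + 1)) * x * qcTTerm x s q (m + 1) (j + 1) +
      q ^ (m + 1) * s * qcTTerm x s q m j := by
  obtain ⟨d, rfl⟩ : ∃ d, m = 2 * j + 1 + d := ⟨m - (2 * j + 1), by omega⟩
  rw [show 2 * j + 1 + d + 2 = 2 * (j + 1) + (d + 1) by ring,
    two_mul_add x s hq (f := j + d + 1) (by omega),
    show 2 * j + 1 + d + 1 = 2 * (j + 1) + d by ring, two_mul_add x s hq (f := j + d) (by omega),
    show 2 * j + 1 + d = 2 * j + (d + 1) by ring, two_mul_add x s hq (f := j + d) (by omega),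
    qfact_succ q (j + d), qfact_succ q d, qfact_succ q j, qpoch_neg_succ q (j + d),
    qpoch_neg_succ q j]
  have : (1 : ℂ) - q ≠ 0 := by simpa using one_sub_pow_ne_zero_of_not_isOfFinOrder hq one_ne_zero
  have := qfact_ne_zero hq
  have := qpoch_neg_ne_zero hq
  have := one_add_pow_ne_zero_of_not_isOfFinOrder hq (Nat.add_one_ne_zero j)
  have := one_add_pow_ne_zero_of_not_isOfFinOrder hq (Nat.add_one_ne_zero (j + d))
  have := one_sub_pow_ne_zero_of_not_isOfFinOrder hq (Nat.add_one_ne_zero j)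
  have := one_sub_pow_ne_zero_of_not_isOfFinOrder hq (Nat.add_one_ne_zero d)
  have := one_sub_pow_ne_zero_of_not_isOfFinOrder hq (Nat.add_one_ne_zero (j + d))
  -- after cancelling the common factor this is the identity
  -- `[n+2] [n-j] (1 + q^(n-j)) = (1 + q^(n+1)) [n+1] [n-2j] + q^(n-2j) [n] [j+1] (1 + q^(j+1))`
  -- between q-integers, for `n = 2j + d + 1`
  simp only [qint]
  field_simp
  ring

lemma succ_succ_zero (hq : ¬IsOfFinOrder q) (m : ℕ) :
    qcTTerm x s q (m + 2) 0 = (1 + q ^ (m + 1)) * x * qcTTerm x s q (m + 1) 0 := by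
  rw [zero_right x s hq, zero_right x s hq, qpoch_neg_succ]
  ring

lemma succ_succ (hq : ¬IsOfFinOrder q) {m : ℕ} (hm : m ≠ 0) (j : ℕ) :
    qcTTerm x s q (m + 2) (j + 1) = (1 + q ^ (m + 1)) * x * qcTTerm x s q (m + 1) (j + 1) +
      q ^ (m + 1) * s * qcTTerm x s q m j := by
  rcases lt_trichotomy m (2 * j) with h | rfl | h
  · rw [eq_zero_of_lt x s h, eq_zero_of_lt x s (by omega : m + 2 < 2 * (j + 1)),
      eq_zero_of_lt x s (by omega : m + 1 < 2 * (j + 1))]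
    ring
  · rw [eq_zero_of_lt x s (by omega : 2 * j + 1 < 2 * (j + 1)), show 2 * j + 2 = 2 * (j + 1) by ring,
      two_mul_self x s hq (Nat.add_one_ne_zero j), two_mul_self x s hq (by omega)]
    ring
  · exact succ_succ_of_lt x s hq h

lemma sum_range_eq {n N : ℕ} (h : n < 2 * N) :
    ∑ j ∈ range N, qcTTerm x s q n j = ∑ j ∈ range (n / 2 + 1), qcTTerm x s q n j :=
  (sum_subset (range_subset_range.2 (by omega)) fun _ hj hj' =>
    eq_zero_of_lt x s (by rw [mem_range] at hj hj'; omega)).symm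

lemma sum_range_succ_succ (hq : ¬IsOfFinOrder q) {m : ℕ} (hm : m ≠ 0) (N : ℕ) :
    ∑ j ∈ range (N + 1), qcTTerm x s q (m + 2) j =
      (1 + q ^ (m + 1)) * x * ∑ j ∈ range (N + 1), qcTTerm x s q (m + 1) j +
        q ^ (m + 1) * s * ∑ j ∈ range N, qcTTerm x s q m j := by
  simp only [sum_range_succ' _ N, succ_succ x s hq hm, succ_succ_zero x s hq, sum_add_distrib,
    mul_add, mul_sum]
  ring

end qcTTerm

open qcTTerm in
theorem qcT_eq_sum_qcTTerm {q : ℂ} (hq : ¬IsOfFinOrder q) (x s : ℂ) (n : ℕ) {N : ℕ}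
    (hN : n + 1 < 2 * N) : qcT x s q (n + 1) = ∑ j ∈ range N, qcTTerm x s q (n + 1) j := by
  induction n using Nat.twoStepInduction generalizing N with
  | zero =>
    rw [sum_range_eq x s hN, sum_range_one, zero_right x s hq]
    simp [qcT]
  | one =>
    have h₀ := zero_right x s hq 1
    have h₁ := two_mul_self x s hq (j := 1) one_ne_zero
    rw [sum_range_eq x s hN]
    simp only [Nat.reduceAdd, Nat.reduceMul, Nat.reduceDiv] at h₀ h₁ ⊢
    rw [sum_range_succ, sum_range_one, h₀, h₁]
    simp [qcT, qpoch]
    ring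
  | more n ih₁ ih₂ =>
    obtain ⟨N, rfl⟩ : ∃ N', N = N' + 1 := ⟨N - 1, by omega⟩
    rw [qcT, ih₂ (N := N + 1) (by omega), ih₁ (N := N) (by omega),
      sum_range_succ_succ x s hq n.add_one_ne_zero]

theorem qcT_explicit_general (q : ℂ) (hq1 : ‖q‖ < 1)
    (x s : ℂ) (n : ℕ) (hn : 0 < n) :
    qcT x s q n = ∑ j ∈ Finset.range (n / 2 + 1),
      q ^ (j ^ 2) * (qint q n / qint q (n - j)) * qbinom q (n - j) j *
        (qpoch (-q) q (n - j - 1) / qpoch (-q) q j) * s ^ j * x ^ (n - 2 * j) := by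
  have hq : ¬IsOfFinOrder q := fun h => hq1.ne h.norm_eq_one
  obtain ⟨m, rfl⟩ := Nat.exists_eq_add_one_of_ne_zero hn.ne'
  exact qcT_eq_sum_qcTTerm hq x s m (by omega)

theorem qcT_explicit (q : ℂ) (hq0 : 0 < ‖q‖) (hq1 : ‖q‖ < 1)
    (x s : ℂ) (n : ℕ) (hn : 0 < n) :
    qcT x s q n = ∑ j ∈ Finset.range (n / 2 + 1),
      q ^ (j ^ 2) * (qint q n / qint q (n - j)) * qbinom q (n - j) j *
        (qpoch (-q) q (n - j - 1) / qpoch (-q) q j) * s ^ j * x ^ (n - 2 * j) :=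
  qcT_explicit_general q hq1 x s n hn
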